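/- arXiv:2306.13463 — 9 statements merged into one kernel-verified Lean document; each statement's English description precedes it below -/
import Mathlib

section
/- Let K be a field that is complete with respect to a nontrivial nonarchimedean absolute value |·|. Let (a_n)_{n≥0} be a sequence in K with |a_n| ≤ 1 for all n, a_0 = 0 and |a_1| = 1. Then for every x ∈ K with |x| < 1 the series φ(x) = Σ_{n≥0} a_n xⁿ converges, satisfies |φ(x)| < 1, and the resulting map φ is a bijection from the open unit ball {x ∈ K : |x| < 1} onto itself. -/
set_option linter.unusedSectionVars false

open IsUltrametricDist Finset

section Aux

variable {K : Type*} [NontriviallyNormedField K] [IsUltrametricDist K] [CompleteSpace K]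
  (a : ℕ → K)

private lemma aux_summable (hbd : ∀ n, ‖a n‖ ≤ 1) {x : K} (hx : ‖x‖ < 1) :
    Summable (fun n => a (n + 2) * x ^ (n + 2)) := by
  apply Summable.of_norm_bounded (g := fun n => ‖x‖ ^ n * ‖x‖ ^ 2)
    ((summable_geometric_of_lt_one (norm_nonneg x) hx).mul_right _)
  intro n
  rw [norm_mul, norm_pow, ← pow_add]
  exact mul_le_of_le_one_left (by positivity) (hbd _)

/-- Bound on the tail sum. -/
private lemma aux_tail_bound (hbd : ∀ n, ‖a n‖ ≤ 1) {x : K} (hx : ‖x‖ ≤ 1) :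
    ‖∑' n, a (n + 2) * x ^ (n + 2)‖ ≤ ‖x‖ ^ 2 := by
  apply norm_tsum_le_of_forall_le_of_nonneg (by positivity)
  intro n
  rw [norm_mul, norm_pow]
  calc ‖a (n + 2)‖ * ‖x‖ ^ (n + 2) ≤ 1 * ‖x‖ ^ (n + 2) := by
        gcongr; exact hbd _
    _ = ‖x‖ ^ (n + 2) := one_mul _
    _ ≤ ‖x‖ ^ 2 := pow_le_pow_of_le_one (norm_nonneg x) hx (by omega)

/-- Lipschitz estimate on the tail sum. -/
private lemma aux_tail_lip (hbd : ∀ n, ‖a n‖ ≤ 1) {x y : K} {r : ℝ}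
    (hx : ‖x‖ ≤ r) (hy : ‖y‖ ≤ r) (hr : r < 1) :
    ‖(∑' n, a (n + 2) * x ^ (n + 2)) - ∑' n, a (n + 2) * y ^ (n + 2)‖ ≤ r * ‖x - y‖ := by
  have hr0 : 0 ≤ r := le_trans (norm_nonneg x) hx
  have hx1 : ‖x‖ < 1 := lt_of_le_of_lt hx hr
  have hy1 : ‖y‖ < 1 := lt_of_le_of_lt hy hr
  rw [← Summable.tsum_sub (aux_summable a hbd hx1) (aux_summable a hbd hy1)]
  have key : ∀ n : ℕ, a (n + 2) * x ^ (n + 2) - a (n + 2) * y ^ (n + 2)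
      = (a (n + 2) * ∑ i ∈ range (n + 2), x ^ i * y ^ (n + 2 - 1 - i)) * (x - y) := by
    intro n
    rw [mul_assoc, geom_sum₂_mul, ← mul_sub]
  simp_rw [key]
  rw [tsum_mul_right, norm_mul]
  gcongr
  apply norm_tsum_le_of_forall_le_of_nonneg hr0
  intro n
  rw [norm_mul]
  have hsum : ‖∑ i ∈ range (n + 2), x ^ i * y ^ (n + 2 - 1 - i)‖ ≤ r := by
    apply norm_sum_le_of_forall_le_of_nonneg hr0
    intro i hi
    rw [norm_mul, norm_pow, norm_pow]
    calc ‖x‖ ^ i * ‖y‖ ^ (n + 2 - 1 - i) ≤ r ^ i * r ^ (n + 2 - 1 - i) := by gcongr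
      _ = r ^ (i + (n + 2 - 1 - i)) := (pow_add r i _).symm
      _ ≤ r := by
          apply pow_le_of_le_one hr0 hr.le
          simp only [mem_range] at hi
          omega
  calc ‖a (n + 2)‖ * ‖∑ i ∈ range (n + 2), x ^ i * y ^ (n + 2 - 1 - i)‖
      ≤ 1 * r := mul_le_mul (hbd _) hsum (norm_nonneg _) zero_le_one
    _ = r := one_mul r

end Aux

/-- Let `K` be a field complete with respect to a nontrivial nonarchimedean absolute value.
If `(a n)` is a sequence in `K` with `‖a n‖ ≤ 1` for all `n`, `a 0 = 0` and `‖a 1‖ = 1`,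
then for every `x` with `‖x‖ < 1` the series `φ x = ∑ a n * x ^ n` converges, satisfies
`‖φ x‖ < 1`, and `φ` is a bijection from the open unit ball onto itself. -/
theorem nonarch_unit_ball_power_series_bijective
    {K : Type*} [NontriviallyNormedField K] [IsUltrametricDist K] [CompleteSpace K]
    (a : ℕ → K) (hbd : ∀ n, ‖a n‖ ≤ 1) (h0 : a 0 = 0) (h1 : ‖a 1‖ = 1) :
    ∃ φ : K → K,
      (∀ x : K, ‖x‖ < 1 → HasSum (fun n => a n * x ^ n) (φ x)) ∧
      (∀ x : K, ‖x‖ < 1 → ‖φ x‖ < 1) ∧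
      Set.BijOn φ {x : K | ‖x‖ < 1} {x : K | ‖x‖ < 1} := by
  have ha1 : a 1 ≠ 0 := by
    intro h; rw [h, norm_zero] at h1; norm_num at h1
  set T : K → K := fun x => ∑' n, a (n + 2) * x ^ (n + 2) with hT
  refine ⟨fun x => T x + a 1 * x, ?_, ?_, ?_, ?_, ?_⟩
  · -- HasSum
    intro x hx
    have := (hasSum_nat_add_iff (f := fun n => a n * x ^ n) 2).mp
      ((aux_summable a hbd hx).hasSum)
    simpa [Finset.sum_range_succ, h0] using this
  · -- norm bound
    intro x hx
    calc ‖T x + a 1 * x‖ ≤ max ‖T x‖ ‖a 1 * x‖ := norm_add_le_max _ _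
      _ < 1 := by
          rw [max_lt_iff]
          constructor
          · exact lt_of_le_of_lt (aux_tail_bound a hbd hx.le)
              (lt_of_le_of_lt (pow_le_of_le_one (norm_nonneg x) hx.le two_ne_zero) hx)
          · rw [norm_mul, h1, one_mul]; exact hx
  · -- MapsTo
    intro x hx
    simp only [Set.mem_setOf_eq] at hx ⊢
    calc ‖T x + a 1 * x‖ ≤ max ‖T x‖ ‖a 1 * x‖ := norm_add_le_max _ _
      _ < 1 := by
          rw [max_lt_iff]
          exact ⟨lt_of_le_of_lt (aux_tail_bound a hbd hx.le)
              (lt_of_le_of_lt (pow_le_of_le_one (norm_nonneg x) hx.le two_ne_zero) hx),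
            by rw [norm_mul, h1, one_mul]; exact hx⟩
  · -- InjOn
    intro x hx y hy hxy
    simp only [Set.mem_setOf_eq] at hx hy
    by_contra hne
    set m := max ‖x‖ ‖y‖ with hm
    have hm1 : m < 1 := max_lt hx hy
    have heq : a 1 * (x - y) = T y - T x := by
      have := hxy
      simp only at this
      linear_combination this
    have hxy0 : 0 < ‖x - y‖ := by
      rwa [norm_pos_iff, sub_ne_zero]
    have : ‖x - y‖ ≤ m * ‖x - y‖ := by
      calc ‖x - y‖ = ‖a 1 * (x - y)‖ := by rw [norm_mul, h1, one_mul]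
        _ = ‖T y - T x‖ := by rw [heq]
        _ ≤ m * ‖y - x‖ := aux_tail_lip a hbd (le_max_right _ _) (le_max_left _ _) hm1
        _ = m * ‖x - y‖ := by rw [norm_sub_rev]
    nlinarith
  · -- SurjOn
    intro y hy
    simp only [Set.mem_setOf_eq] at hy
    have hr0 : (0 : ℝ) ≤ ‖y‖ := norm_nonneg y
    set S := Metric.closedBall (0 : K) ‖y‖ with hS
    have hmem : ∀ z : K, z ∈ S ↔ ‖z‖ ≤ ‖y‖ := by
      intro z; simp [hS, Metric.mem_closedBall, dist_zero_right]
    have hclosed : IsClosed S := Metric.isClosed_closedBall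
    haveI : CompleteSpace S := hclosed.completeSpace_coe
    haveI : Nonempty S := ⟨⟨0, by simp [hS, hr0]⟩⟩
    have hna1 : ‖(a 1)⁻¹‖ = 1 := by rw [norm_inv, h1, inv_one]
    have hmap : ∀ x : K, ‖x‖ ≤ ‖y‖ → ‖(a 1)⁻¹ * (y - T x)‖ ≤ ‖y‖ := by
      intro x hx
      rw [norm_mul, hna1, one_mul]
      calc ‖y - T x‖ ≤ max ‖y‖ ‖T x‖ := by
            rw [sub_eq_add_neg]
            simpa using norm_add_le_max y (-(T x))
        _ ≤ ‖y‖ := by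
            apply max_le le_rfl
            calc ‖T x‖ ≤ ‖x‖ ^ 2 := aux_tail_bound a hbd (hx.trans hy.le)
              _ ≤ ‖y‖ ^ 2 := by gcongr
              _ ≤ ‖y‖ := pow_le_of_le_one hr0 hy.le two_ne_zero
    set g : S → S := fun x => ⟨(a 1)⁻¹ * (y - T x.1), by
      rw [hmem]; exact hmap x.1 ((hmem x.1).mp x.2)⟩ with hg
    have hcontr : ContractingWith ‖y‖₊ g := by
      constructor
      · rwa [← NNReal.coe_lt_one, coe_nnnorm]
      · apply LipschitzWith.of_dist_le_mul
        intro x x'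
        rw [Subtype.dist_eq, Subtype.dist_eq, dist_eq_norm, dist_eq_norm]
        have : (g x).1 - (g x').1 = (a 1)⁻¹ * (T x'.1 - T x.1) := by
          simp only [hg]; ring
        rw [this, norm_mul, hna1, one_mul, coe_nnnorm]
        calc ‖T x'.1 - T x.1‖ ≤ ‖y‖ * ‖x'.1 - x.1‖ :=
              aux_tail_lip a hbd ((hmem _).mp x'.2) ((hmem _).mp x.2) hy
          _ = ‖y‖ * ‖x.1 - x'.1‖ := by rw [norm_sub_rev]
    obtain ⟨x, hxfix⟩ : ∃ x : S, g x = x := ⟨_, hcontr.fixedPoint_isFixedPt⟩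
    refine ⟨x.1, ?_, ?_⟩
    · simp only [Set.mem_setOf_eq]
      exact lt_of_le_of_lt ((hmem _).mp x.2) hy
    · have := congrArg Subtype.val hxfix
      simp only [hg] at this
      have h2 : y - T x.1 = a 1 * x.1 := by
        field_simp at this
        linear_combination this
      simp only
      linear_combination -h2
end

section
/- Let K be a field that is complete with respect to a nontrivial nonarchimedean absolute value |·|. Let (a_n)_{n≥0} be a sequence in K with a_0 = 0 and a_1 ≠ 0, and suppose there exist real constants C > 0 and ρ > 0 such that |a_n| ≤ C·ρⁿ for all n (i.e., the power series Σ a_n Xⁿ has positive radius of convergence). Then there exist real numbers r > 0 and s > 0 such that for every x ∈ K with |x| < r the series φ(x) = Σ_{n≥0} a_n xⁿ converges, and φ restricts to a bijection from {x ∈ K : |x| < r} onto {y ∈ K : |y| < s}. -/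
set_option maxHeartbeats 1000000

open IsUltrametricDist

private lemma aux_powdiff {K : Type*} [NormedField K] [IsUltrametricDist K] (x y : K) :
    ∀ n : ℕ, ‖x ^ (n + 1) - y ^ (n + 1)‖ ≤ (max ‖x‖ ‖y‖) ^ n * ‖x - y‖ := by
  intro n
  induction n with
  | zero => simp
  | succ n ih =>
    have h : x ^ (n + 1 + 1) - y ^ (n + 1 + 1)
        = x * (x ^ (n + 1) - y ^ (n + 1)) + (x - y) * y ^ (n + 1) := by ring
    rw [h]
    refine (norm_add_le_max _ _).trans ?_
    rw [max_le_iff]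
    constructor
    · rw [norm_mul]
      calc ‖x‖ * ‖x ^ (n + 1) - y ^ (n + 1)‖
          ≤ max ‖x‖ ‖y‖ * ((max ‖x‖ ‖y‖) ^ n * ‖x - y‖) :=
            mul_le_mul (le_max_left _ _) ih (norm_nonneg _)
              (le_trans (norm_nonneg _) (le_max_left _ _))
        _ = (max ‖x‖ ‖y‖) ^ (n + 1) * ‖x - y‖ := by ring
    · rw [norm_mul, norm_pow]
      calc ‖x - y‖ * ‖y‖ ^ (n + 1) ≤ ‖x - y‖ * (max ‖x‖ ‖y‖) ^ (n + 1) := by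
            gcongr
            exact le_max_right _ _
        _ = _ := mul_comm _ _

/-- Let `K` be a field complete with respect to a nontrivial nonarchimedean absolute value.
If `(a n)` is a sequence in `K` with `a 0 = 0`, `a 1 ≠ 0` and `‖a n‖ ≤ C * ρ ^ n` for some
`C, ρ > 0`, then there are radii `r, s > 0` such that `φ x = ∑ a n * x ^ n` converges for
`‖x‖ < r` and `φ` restricts to a bijection from `{x : ‖x‖ < r}` onto `{y : ‖y‖ < s}`. -/
theorem nonarch_power_series_local_bijection
    {K : Type*} [NontriviallyNormedField K] [IsUltrametricDist K] [CompleteSpace K]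
    (a : ℕ → K) (h0 : a 0 = 0) (h1 : a 1 ≠ 0)
    (C ρ : ℝ) (hC : 0 < C) (hρ : 0 < ρ) (hbd : ∀ n, ‖a n‖ ≤ C * ρ ^ n) :
    ∃ r s : ℝ, 0 < r ∧ 0 < s ∧
      ∃ φ : K → K,
        (∀ x : K, ‖x‖ < r → HasSum (fun n => a n * x ^ n) (φ x)) ∧
        Set.BijOn φ {x : K | ‖x‖ < r} {y : K | ‖y‖ < s} := by
  set A : ℝ := ‖a 1‖ with hAdef
  have hA : 0 < A := norm_pos_iff.mpr h1
  set r : ℝ := min (1 / (2 * ρ)) (A / (2 * C * ρ ^ 2)) with hrdef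
  have hr : 0 < r := lt_min (by positivity) (by positivity)
  have hρr : ρ * r ≤ 1 / 2 := by
    have : r ≤ 1 / (2 * ρ) := min_le_left _ _
    calc ρ * r ≤ ρ * (1 / (2 * ρ)) := by nlinarith
      _ = 1 / 2 := by field_simp
  have hCr : C * ρ ^ 2 * r ≤ A / 2 := by
    have : r ≤ A / (2 * C * ρ ^ 2) := min_le_right _ _
    have h2 : 0 < 2 * C * ρ ^ 2 := by positivity
    calc C * ρ ^ 2 * r ≤ C * ρ ^ 2 * (A / (2 * C * ρ ^ 2)) := by nlinarith
      _ = A / 2 := by field_simp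
  -- key coefficient bound
  have key : ∀ (n : ℕ) (t : ℝ), 0 ≤ t → t ≤ r → ‖a (n + 2)‖ * t ^ (n + 1) ≤ A / 2 := by
    intro n t ht htr
    have hρt : ρ * t ≤ 1 := by nlinarith
    calc ‖a (n + 2)‖ * t ^ (n + 1) ≤ C * ρ ^ (n + 2) * t ^ (n + 1) := by
          have := hbd (n + 2); gcongr
      _ = (C * ρ ^ 2 * t) * (ρ * t) ^ n := by ring
      _ ≤ (A / 2) * 1 := by
          apply mul_le_mul (by nlinarith) (pow_le_one₀ (by positivity) hρt)
            (by positivity) (by positivity)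
      _ = A / 2 := mul_one _
  -- summability
  have hsum : ∀ x : K, ‖x‖ ≤ r → Summable (fun n => a n * x ^ n) := by
    intro x hx
    apply Summable.of_norm
    apply Summable.of_nonneg_of_le (f := fun n => C * (ρ * ‖x‖) ^ n)
      (fun n => norm_nonneg _)
    · intro n
      rw [norm_mul, norm_pow, mul_pow]
      calc ‖a n‖ * ‖x‖ ^ n ≤ C * ρ ^ n * ‖x‖ ^ n := by have := hbd n; gcongr
        _ = C * (ρ ^ n * ‖x‖ ^ n) := by ring
    · apply Summable.mul_left
      apply summable_geometric_of_lt_one (by positivity)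
      calc ρ * ‖x‖ ≤ ρ * r := by gcongr
        _ ≤ 1 / 2 := hρr
        _ < 1 := by norm_num
  have hsum2 : ∀ x : K, ‖x‖ ≤ r → Summable (fun n => a (n + 2) * x ^ (n + 2)) := by
    intro x hx
    exact (summable_nat_add_iff 2).mpr (hsum x hx)
  set g : K → K := fun x => ∑' n, a (n + 2) * x ^ (n + 2) with hgdef
  set φ : K → K := fun x => a 1 * x + g x with hφdef
  have hg0 : g 0 = 0 := by
    simp [hgdef]
  have hφ0 : φ 0 = 0 := by simp [hφdef, hg0]
  have hφsum : ∀ x : K, ‖x‖ ≤ r → HasSum (fun n => a n * x ^ n) (φ x) := by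
    intro x hx
    have hg : HasSum (fun n => a (n + 2) * x ^ (n + 2)) (g x) := (hsum2 x hx).hasSum
    have := (hasSum_nat_add_iff (f := fun n => a n * x ^ n) 2).mp hg
    have hsum2' : (∑ i ∈ Finset.range 2, a i * x ^ i) = a 1 * x := by
      simp [Finset.sum_range_succ, h0]
    rw [hsum2'] at this
    have hφx : φ x = g x + a 1 * x := by show a 1 * x + g x = g x + a 1 * x; ring
    rw [hφx]; exact this
  -- Lipschitz-type estimate for g
  have hgdiff : ∀ x x' : K, ‖x‖ ≤ r → ‖x'‖ ≤ r → ‖g x - g x'‖ ≤ A / 2 * ‖x - x'‖ := by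
    intro x x' hx hx'
    have hsub : g x - g x' = ∑' n, (a (n + 2) * x ^ (n + 2) - a (n + 2) * x' ^ (n + 2)) :=
      ((hsum2 x hx).hasSum.sub (hsum2 x' hx').hasSum).tsum_eq.symm
    rw [hsub]
    apply norm_tsum_le_of_forall_le_of_nonneg (by positivity)
    intro n
    rw [← mul_sub, norm_mul]
    have hmax : max ‖x‖ ‖x'‖ ≤ r := max_le hx hx'
    calc ‖a (n + 2)‖ * ‖x ^ (n + 2) - x' ^ (n + 2)‖
        ≤ ‖a (n + 2)‖ * ((max ‖x‖ ‖x'‖) ^ (n + 1) * ‖x - x'‖) := by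
          gcongr
          exact aux_powdiff x x' (n + 1)
      _ = (‖a (n + 2)‖ * (max ‖x‖ ‖x'‖) ^ (n + 1)) * ‖x - x'‖ := by ring
      _ ≤ A / 2 * ‖x - x'‖ := by
          gcongr
          exact key n _ (le_trans (norm_nonneg _) (le_max_left _ _)) hmax
  -- φ is an A-scaled isometry on the ball
  have hφdist : ∀ x x' : K, ‖x‖ ≤ r → ‖x'‖ ≤ r → ‖φ x - φ x'‖ = A * ‖x - x'‖ := by
    intro x x' hx hx'
    rcases eq_or_ne x x' with rfl | hne
    · simp
    · have hxx' : 0 < ‖x - x'‖ := by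
        rw [norm_pos_iff]; exact sub_ne_zero_of_ne hne
      have heq : φ x - φ x' = a 1 * (x - x') + (g x - g x') := by rw [hφdef]; ring
      have h1n : ‖a 1 * (x - x')‖ = A * ‖x - x'‖ := by rw [norm_mul]
      have hlt : ‖g x - g x'‖ < ‖a 1 * (x - x')‖ := by
        rw [h1n]
        calc ‖g x - g x'‖ ≤ A / 2 * ‖x - x'‖ := hgdiff x x' hx hx'
          _ < A * ‖x - x'‖ := by nlinarith
      rw [heq, norm_add_eq_max_of_norm_ne_norm hlt.ne', max_eq_left hlt.le, h1n]
  set s : ℝ := A * r with hsdef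
  have hs : 0 < s := by positivity
  refine ⟨r, s, hr, hs, φ, fun x hx => hφsum x hx.le, ?_, ?_, ?_⟩
  · -- MapsTo
    intro x hx
    simp only [Set.mem_setOf_eq] at hx ⊢
    have := hφdist x 0 hx.le (by simp [hr.le])
    rw [hφ0, sub_zero, sub_zero] at this
    rw [this, hsdef]
    exact mul_lt_mul_of_pos_left hx hA
  · -- InjOn
    intro x hx x' hx' hxy
    simp only [Set.mem_setOf_eq] at hx hx'
    have := hφdist x x' hx.le hx'.le
    rw [hxy, sub_self, norm_zero] at this
    have : ‖x - x'‖ = 0 := by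
      rcases mul_eq_zero.mp this.symm with h | h
      · exact absurd h (ne_of_gt hA)
      · exact h
    rw [norm_sub_eq_zero_iff] at this
    exact this
  · -- SurjOn
    intro y hy
    simp only [Set.mem_setOf_eq] at hy
    set R : ℝ := ‖y‖ / A with hRdef
    have hR0 : 0 ≤ R := by positivity
    have hRr : R < r := by
      rw [hRdef, div_lt_iff₀ hA, mul_comm]
      rwa [hsdef] at hy
    have hyAR : ‖y‖ = A * R := by rw [hRdef]; field_simp
    set α := Metric.closedBall (0 : K) R with hαdef
    haveI : CompleteSpace α := IsClosed.completeSpace_coe (hs := Metric.isClosed_closedBall)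
    haveI : Nonempty α := ⟨⟨0, Metric.mem_closedBall_self hR0⟩⟩
    have hmem : ∀ z : α, ‖(z : K)‖ ≤ R := fun z =>
      mem_closedBall_zero_iff.mp z.2
    have hmemr : ∀ z : α, ‖(z : K)‖ ≤ r := fun z => (hmem z).trans hRr.le
    have hTmem : ∀ z : α, (y - g (z : K)) / a 1 ∈ α := by
      intro z
      show (y - g (z : K)) / a 1 ∈ Metric.closedBall (0 : K) R
      rw [mem_closedBall_zero_iff, norm_div]
      rw [div_le_iff₀ hA]
      have hgz : ‖g (z : K)‖ ≤ A / 2 * ‖(z : K)‖ := by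
        have := hgdiff (z : K) 0 (hmemr z) (by simp [hr.le])
        rwa [hg0, sub_zero, sub_zero] at this
      have : ‖y - g (z : K)‖ ≤ max ‖y‖ ‖g (z : K)‖ := by
        rw [sub_eq_add_neg]
        exact (norm_add_le_max _ _).trans (by rw [norm_neg])
      refine this.trans (max_le ?_ ?_)
      · rw [hyAR]; rw [mul_comm]
      · calc ‖g (z : K)‖ ≤ A / 2 * ‖(z : K)‖ := hgz
          _ ≤ A / 2 * R := by gcongr; exact hmem z
          _ ≤ R * A := by nlinarith
    set T : α → α := fun z => ⟨(y - g (z : K)) / a 1, hTmem z⟩ with hTdef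
    have hcontr : ContractingWith 2⁻¹ T := by
      constructor
      · exact inv_lt_one_of_one_lt₀ one_lt_two
      · apply LipschitzWith.of_dist_le_mul
        intro u v
        have hco : ((2⁻¹ : NNReal) : ℝ) = 1 / 2 := by norm_num
        rw [hco, Subtype.dist_eq, Subtype.dist_eq, hTdef]
        simp only [dist_eq_norm]
        have heq : ((y - g (u : K)) / a 1 - (y - g (v : K)) / a 1)
            = (g (v : K) - g (u : K)) / a 1 := by
          field_simp
          ring
        rw [heq, norm_div]
        have hb := hgdiff (v : K) (u : K) (hmemr v) (hmemr u)
        rw [div_le_iff₀ hA]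
        calc ‖g (v : K) - g (u : K)‖ ≤ A / 2 * ‖(v : K) - (u : K)‖ := hb
          _ = 1 / 2 * ‖(u : K) - (v : K)‖ * A := by rw [norm_sub_rev]; ring
    set x₀ : α := hcontr.fixedPoint T with hx₀def
    have hfix : T x₀ = x₀ := hcontr.fixedPoint_isFixedPt
    have hfix' : (y - g (x₀ : K)) / a 1 = (x₀ : K) := by
      have := congrArg (Subtype.val) hfix
      exact this
    have hφx₀ : φ (x₀ : K) = y := by
      have hkey : a 1 * (x₀ : K) = y - g (x₀ : K) := by
        conv_lhs => rw [← hfix']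
        field_simp
      show a 1 * (x₀ : K) + g (x₀ : K) = y
      rw [hkey]; ring
    exact ⟨(x₀ : K), lt_of_le_of_lt (hmem x₀) hRr, hφx₀⟩
end

section
/- Let K be a field of characteristic zero, g ≥ 1, and let A, B, D be g×g matrices over K such that the 2g×2g block matrix [[A, B], [0, D]] is not a scalar multiple of the identity matrix. In the polynomial ring K[Y,Z], form the g×g matrix of polynomials P(Y,Z) = Yᵀ·A·adj(Yᵀ)·Zᵀ − det(Y)·Yᵀ·B − det(Y)·Zᵀ·D, where A, B, D are viewed as matrices of constant polynomials. Then there exist indices i, j ∈ {1,…,g} such that the (i,j) entry of P(Y,Z) does not belong to the ideal I. -/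
open Matrix MvPolynomial

/-- The variable index set for the polynomial ring `K[Y,Z]` in the `2g²` entries of two
`g × g` matrices of indeterminates `Y` (left summand) and `Z` (right summand). -/
abbrev MVar (g : ℕ) := (Fin g × Fin g) ⊕ (Fin g × Fin g)

/-- The `g × g` matrix of indeterminates `Y`. -/
noncomputable def Ymat (K : Type*) [CommRing K] (g : ℕ) :
    Matrix (Fin g) (Fin g) (MvPolynomial (MVar g) K) :=
  Matrix.of fun i j => X (Sum.inl (i, j))

/-- The `g × g` matrix of indeterminates `Z`. -/
noncomputable def Zmat (K : Type*) [CommRing K] (g : ℕ) :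
    Matrix (Fin g) (Fin g) (MvPolynomial (MVar g) K) :=
  Matrix.of fun i j => X (Sum.inr (i, j))

/-- The matrix `Yᵀ·Z − Zᵀ·Y` of trivial relations. -/
noncomputable def relMat (K : Type*) [CommRing K] (g : ℕ) :
    Matrix (Fin g) (Fin g) (MvPolynomial (MVar g) K) :=
  (Ymat K g)ᵀ * Zmat K g - (Zmat K g)ᵀ * Ymat K g

/-- The ideal `I` of `K[Y,Z]` generated by the `g²` entries of `Yᵀ·Z − Zᵀ·Y`. -/
noncomputable def relIdeal (K : Type*) [CommRing K] (g : ℕ) :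
    Ideal (MvPolynomial (MVar g) K) :=
  Ideal.span {p | ∃ i j, p = relMat K g i j}

/-- The matrix of polynomials `P(Y,Z) = Yᵀ·A·adj(Yᵀ)·Zᵀ − det Y • Yᵀ·B − det Y • Zᵀ·D`. -/
noncomputable def Pmat {K : Type*} [CommRing K] {g : ℕ}
    (A B D : Matrix (Fin g) (Fin g) K) :
    Matrix (Fin g) (Fin g) (MvPolynomial (MVar g) K) :=
  (Ymat K g)ᵀ * (A.map C) * ((Ymat K g)ᵀ).adjugate * (Zmat K g)ᵀ
    - (Ymat K g).det • ((Ymat K g)ᵀ * (B.map C))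
    - (Ymat K g).det • ((Zmat K g)ᵀ * (D.map C))


lemma stdBasis_transpose {K : Type*} [Field K] {g : ℕ} (i j : Fin g) :
    (single i j (1:K))ᵀ = single j i 1 := by
  ext a b
  simp only [Matrix.transpose_apply, Matrix.single, Matrix.of_apply]
  simp [and_comm]

lemma exists_symm_witness {K : Type*} [Field K]
    {g : ℕ} (hg : 1 ≤ g) (A B D : Matrix (Fin g) (Fin g) K)
    (hABD : ¬ ∃ c : K,
      Matrix.fromBlocks A B 0 D = c • (1 : Matrix (Fin g ⊕ Fin g) (Fin g ⊕ Fin g) K)) :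
    ∃ Z₀ : Matrix (Fin g) (Fin g) K, Z₀ᵀ = Z₀ ∧ A * Z₀ - B - Z₀ * D ≠ 0 := by
  by_contra h
  push_neg at h
  have h' : ∀ Z₀ : Matrix (Fin g) (Fin g) K, Z₀ᵀ = Z₀ → A * Z₀ - B - Z₀ * D = 0 := h
  have hB : B = 0 := by
    have := h' 0 (by simp)
    simpa using this.symm
  have hAD : A = D := by
    have := h' 1 (by simp)
    rw [hB] at this
    simpa [sub_eq_zero] using this
  have hcomm : ∀ i j : Fin g, A * (single i j 1 + single j i 1)
      = (single i j 1 + single j i 1) * A := by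
    intro i j
    have hsymm : (single i j (1:K) + single j i 1)ᵀ
        = single i j 1 + single j i 1 := by
      rw [Matrix.transpose_add, stdBasis_transpose, stdBasis_transpose, add_comm]
    have := h' _ hsymm
    rw [hB, ← hAD] at this
    simpa [sub_eq_zero] using this
  have hdiagC : ∀ i j : Fin g, A * single j j 1 = single j j 1 * A := by
    intro i j
    have hsymm : (single j j (1:K))ᵀ = single j j 1 := stdBasis_transpose j j
    have := h' _ hsymm
    rw [hB, ← hAD] at this
    simpa [sub_eq_zero] using this
  -- off-diagonal entries vanish
  have hoff : ∀ i j : Fin g, i ≠ j → A i j = 0 := by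
    intro i j hij
    have h1 := congrFun (congrFun (hdiagC i j) i) j
    rw [Matrix.mul_single_apply_same,
      Matrix.single_mul_apply_of_ne _ _ _ _ _ hij] at h1
    simpa using h1
  -- diagonal entries equal
  have hdiag : ∀ i j : Fin g, A i i = A j j := by
    intro i j
    rcases eq_or_ne i j with rfl | hij
    · rfl
    have h1 := congrFun (congrFun (hcomm i j) i) j
    rw [Matrix.mul_add, Matrix.add_mul] at h1
    have e1 : (A * single i j (1:K)) i j = A i i := by
      rw [Matrix.mul_single_apply_same]; ring
    have e2 : (A * single j i (1:K)) i j = 0 :=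
      Matrix.mul_single_apply_of_ne 1 j i i j hij.symm A
    have e3 : (single i j (1:K) * A) i j = A j j := by
      rw [Matrix.single_mul_apply_same]; ring
    have e4 : (single j i (1:K) * A) i j = 0 :=
      Matrix.single_mul_apply_of_ne 1 j i i j hij A
    simp only [Matrix.add_apply, e1, e2, e3, e4, add_zero] at h1
    exact h1
  -- so A = c • 1
  set i0 : Fin g := ⟨0, hg⟩
  have hA : A = (A i0 i0) • (1 : Matrix (Fin g) (Fin g) K) := by
    ext i j
    rcases eq_or_ne i j with rfl | hij
    · simp [Matrix.one_apply, hdiag i i0]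
    · simp [Matrix.one_apply_ne hij, hoff i j hij]
  apply hABD
  refine ⟨A i0 i0, ?_⟩
  have hD : D = (A i0 i0) • (1 : Matrix (Fin g) (Fin g) K) := hAD ▸ hA
  rw [hB, hA, hD]
  ext (i | i) (j | j) <;>
    simp [Matrix.fromBlocks, Matrix.one_apply, Matrix.smul_apply]

section Eval
variable {K : Type*} [CommRing K] {g : ℕ} (Z₀ : Matrix (Fin g) (Fin g) K)

/-- Evaluation at `Y = 1`, `Z = Z₀`. -/
noncomputable def evalHom : MvPolynomial (MVar g) K →+* K :=
  (aeval (Sum.elim (fun p : Fin g × Fin g => if p.1 = p.2 then (1:K) else 0)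
    (fun p : Fin g × Fin g => Z₀ p.1 p.2))).toRingHom

lemma evalHom_Y : (Ymat K g).map (evalHom Z₀) = 1 := by
  ext i j
  simp [Ymat, evalHom, Matrix.map_apply, Matrix.one_apply]

lemma evalHom_Z : (Zmat K g).map (evalHom Z₀) = Z₀ := by
  ext i j
  simp [Zmat, evalHom, Matrix.map_apply]

lemma evalHom_C (M : Matrix (Fin g) (Fin g) K) : (M.map C).map (evalHom Z₀) = M := by
  ext i j
  simp [evalHom, Matrix.map_apply]

lemma evalHom_rel (hsym : Z₀ᵀ = Z₀) (i j : Fin g) : evalHom Z₀ (relMat K g i j) = 0 := by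
  have : (relMat K g).map (evalHom Z₀) = 0 := by
    unfold relMat
    rw [Matrix.map_sub _ (map_sub _), Matrix.map_mul, Matrix.map_mul, Matrix.transpose_map,
      Matrix.transpose_map, evalHom_Y, evalHom_Z, hsym]
    simp
  exact congrFun (congrFun this i) j

lemma evalHom_relIdeal (hsym : Z₀ᵀ = Z₀) {p : MvPolynomial (MVar g) K}
    (hp : p ∈ relIdeal K g) : evalHom Z₀ p = 0 := by
  have hle : relIdeal K g ≤ RingHom.ker (evalHom Z₀) := by
    refine Ideal.span_le.mpr ?_
    rintro q ⟨i, j, rfl⟩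
    exact evalHom_rel Z₀ hsym i j
  exact hle hp

lemma evalHom_Pmat (hsym : Z₀ᵀ = Z₀) (A B D : Matrix (Fin g) (Fin g) K) :
    (Pmat A B D).map (evalHom Z₀) = A * Z₀ - B - Z₀ * D := by
  unfold Pmat
  have hdet : (evalHom Z₀) (Ymat K g).det = 1 := by
    rw [RingHom.map_det, RingHom.mapMatrix_apply, evalHom_Y, Matrix.det_one]
  have hsmul : ∀ M : Matrix (Fin g) (Fin g) (MvPolynomial (MVar g) K),
      ((Ymat K g).det • M).map (evalHom Z₀) = M.map (evalHom Z₀) := by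
    intro M
    ext i j
    simp [Matrix.map_apply, Matrix.smul_apply, hdet]
  rw [Matrix.map_sub _ (map_sub _), Matrix.map_sub _ (map_sub _), hsmul, hsmul,
    Matrix.map_mul, Matrix.map_mul, Matrix.map_mul, Matrix.map_mul, Matrix.map_mul]
  have hadj : (Ymat K g)ᵀ.adjugate.map (evalHom Z₀) = 1 := by
    have := (evalHom Z₀).map_adjugate (Ymat K g)ᵀ
    rw [RingHom.mapMatrix_apply, RingHom.mapMatrix_apply, Matrix.transpose_map,
      evalHom_Y] at this
    simpa using this
  rw [hadj, Matrix.transpose_map, Matrix.transpose_map, evalHom_Y, evalHom_Z,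
    evalHom_C, evalHom_C, evalHom_C, hsym]
  simp

end Eval

/-- If the block matrix `[[A, B], [0, D]]` is not scalar, then some entry of the matrix of
polynomials `P(Y,Z) = Yᵀ·A·adj(Yᵀ)·Zᵀ − det Y • Yᵀ·B − det Y • Zᵀ·D` is not in the ideal of
trivial relations `I`. -/
theorem entry_not_in_trivial_relations {K : Type*} [Field K] [CharZero K]
    {g : ℕ} (hg : 1 ≤ g) (A B D : Matrix (Fin g) (Fin g) K)
    (hABD : ¬ ∃ c : K,
      Matrix.fromBlocks A B 0 D = c • (1 : Matrix (Fin g ⊕ Fin g) (Fin g ⊕ Fin g) K)) :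
    ∃ i j : Fin g, Pmat A B D i j ∉ relIdeal K g := by
  obtain ⟨Z₀, hsym, hne⟩ := exists_symm_witness hg A B D hABD
  have hij : ∃ i j : Fin g, (A * Z₀ - B - Z₀ * D) i j ≠ 0 := by
    by_contra hc
    push_neg at hc
    exact hne (by ext i j; simpa using hc i j)
  obtain ⟨i, j, hij⟩ := hij
  refine ⟨i, j, fun hp => hij ?_⟩
  have h0 : evalHom Z₀ (Pmat A B D i j) = 0 := evalHom_relIdeal Z₀ hsym hp
  have h1 : (Pmat A B D).map (evalHom Z₀) i j = (A * Z₀ - B - Z₀ * D) i j := by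
    rw [evalHom_Pmat Z₀ hsym A B D]
  rw [Matrix.map_apply, h0] at h1
  exact h1.symm
end

section
/- Let K be a field, g ≥ 2, and let A be a g×g matrix over K that is not a scalar multiple of the identity matrix. Then there exists a symmetric matrix z ∈ M_g(K) (i.e., zᵀ = z) such that A·z ≠ z·A. -/
open Matrix

lemma transpose_stdBasisMatrix_aux {K : Type*} [Zero K] {g : ℕ} (i j : Fin g) (c : K) :
    (Matrix.single i j c)ᵀ = Matrix.single j i c := by
  ext a b
  simp only [transpose_apply, Matrix.single, of_apply]
  exact if_congr and_comm rfl rfl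

/-- If `g ≥ 2` and `A ∈ M_g(K)` is not a scalar multiple of the identity, there is a
symmetric matrix `z` not commuting with `A`. -/
theorem exists_symmetric_not_commuting {K : Type*} [Field K] {g : ℕ} (hg : 2 ≤ g)
    (A : Matrix (Fin g) (Fin g) K)
    (hA : ¬ ∃ c : K, A = c • (1 : Matrix (Fin g) (Fin g) K)) :
    ∃ z : Matrix (Fin g) (Fin g) K, zᵀ = z ∧ A * z ≠ z * A := by
  by_contra h
  push_neg at h
  apply hA
  -- h : ∀ z, zᵀ = z → A * z = z * A
  have hdiag : ∀ i j : Fin g, i ≠ j → A i j = 0 := by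
    intro i j hij
    have hz : (Matrix.single j j (1:K))ᵀ = Matrix.single j j 1 := by
      ext a b
      simp [Matrix.single, transpose_apply, and_comm]
    have := congrFun (congrFun (h _ hz) i) j
    simpa [mul_apply, Matrix.single, Finset.sum_ite_eq, Finset.sum_ite_eq',
      hij, hij.symm] using this
  have heq : ∀ i j : Fin g, i ≠ j → A i i = A j j := by
    intro i j hij
    have hz : (Matrix.single i j (1:K) + Matrix.single j i 1)ᵀ
        = Matrix.single i j (1:K) + Matrix.single j i 1 := by
      rw [transpose_add, transpose_stdBasisMatrix_aux, transpose_stdBasisMatrix_aux,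
        add_comm]
    have := congrFun (congrFun (h _ hz) i) j
    simpa [mul_add, add_mul, hij, hij.symm] using this
  have i0 : Fin g := ⟨0, by omega⟩
  refine ⟨A i0 i0, ?_⟩
  ext i j
  by_cases hij : i = j
  · subst hij
    by_cases hi : i = i0
    · simp [hi, one_apply]
    · simp [one_apply, heq i0 i (fun e => hi e.symm)]
  · simp [one_apply, hij, hdiag i j hij]
end

section
/- Let K be a field of characteristic zero and let g = 2m with m ≥ 1. Let Q be a nonzero polynomial in K[Y,Z] involving only the variables Y_{ij} and Z_{ij} with 1 ≤ i ≤ m (i.e., Q lies in the subalgebra of K[Y,Z] generated by the variables from the top m rows of Y and of Z). Then Q does not belong to the ideal I. -/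
open Matrix MvPolynomial

/-- The row index of a variable of `K[Y,Z]`. -/
def rowIdx {g : ℕ} (v : MVar g) : Fin g := Sum.elim Prod.fst Prod.fst v

/-- Substitution: variables in the bottom `m` rows of `Y` get replaced by the corresponding
variables in the top `m` rows of `Z` and vice versa; top-row variables are fixed. -/
def swapVar (m : ℕ) : MVar (2 * m) → MVar (2 * m)
  | Sum.inl (i, j) =>
      if (i : ℕ) < m then Sum.inl (i, j)
      else Sum.inr (⟨(i : ℕ) - m, by have := i.isLt; omega⟩, j)
  | Sum.inr (i, j) =>
      if (i : ℕ) < m then Sum.inr (i, j)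
      else Sum.inl (⟨(i : ℕ) - m, by have := i.isLt; omega⟩, j)

lemma rename_eq_self_of_vars {R σ : Type*} [CommSemiring R] (f : σ → σ)
    (q : MvPolynomial σ R) (h : ∀ v ∈ q.vars, f v = v) : rename f q = q := by
  classical
  rw [MvPolynomial.as_sum q, map_sum]
  refine Finset.sum_congr rfl fun u hu => ?_
  rw [rename_monomial]
  congr 1
  have : Finsupp.mapDomain f u = Finsupp.mapDomain id u :=
    Finsupp.mapDomain_congr fun x hx => h x ((mem_vars x).mpr ⟨u, hu, hx⟩)
  rw [this, Finsupp.mapDomain_id]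

lemma rename_swap_relMat (K : Type*) [CommRing K] (m : ℕ) (i j : Fin (2 * m)) :
    rename (swapVar m) (relMat K (2 * m) i j) = 0 := by
  have hexp : relMat K (2 * m) i j =
      ∑ k : Fin (2 * m), (X (Sum.inl (k, i)) * X (Sum.inr (k, j))
        - X (Sum.inr (k, i)) * X (Sum.inl (k, j)) : MvPolynomial (MVar (2 * m)) K) := by
    simp [relMat, Ymat, Zmat, Matrix.mul_apply, Matrix.sub_apply, Finset.sum_sub_distrib]
  rw [hexp, map_sum]
  have key : ∀ k : Fin (2 * m),
      (rename (swapVar m)) ((X (Sum.inl (k, i)) * X (Sum.inr (k, j))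
        - X (Sum.inr (k, i)) * X (Sum.inl (k, j)) : MvPolynomial (MVar (2 * m)) K)) =
      (fun k => X (swapVar m (Sum.inl (k, i))) * X (swapVar m (Sum.inr (k, j)))
        - X (swapVar m (Sum.inr (k, i))) * X (swapVar m (Sum.inl (k, j)))) k := by
    intro k; simp
  simp only [key]
  set ι : Fin (2 * m) → Fin (2 * m) := fun k =>
    if h : (k : ℕ) < m then ⟨(k : ℕ) + m, by omega⟩
    else ⟨(k : ℕ) - m, by have := k.isLt; omega⟩ with hι
  have swapL : ∀ (a : Fin (2 * m)) (b : Fin (2 * m)) (h : (a : ℕ) < m),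
      swapVar m (Sum.inl (a, b)) = Sum.inl (a, b) := by
    intro a b h; simp [swapVar, h]
  have swapR : ∀ (a : Fin (2 * m)) (b : Fin (2 * m)) (h : (a : ℕ) < m),
      swapVar m (Sum.inr (a, b)) = Sum.inr (a, b) := by
    intro a b h; simp [swapVar, h]
  have swapL' : ∀ (a a' : Fin (2 * m)) (b : Fin (2 * m)) (h : ¬ (a : ℕ) < m)
      (h' : (a' : ℕ) = (a : ℕ) - m), swapVar m (Sum.inl (a, b)) = Sum.inr (a', b) := by
    intro a a' b h h'; simp only [swapVar, h, if_false]
    congr 1; ext <;> simp [h']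
  have swapR' : ∀ (a a' : Fin (2 * m)) (b : Fin (2 * m)) (h : ¬ (a : ℕ) < m)
      (h' : (a' : ℕ) = (a : ℕ) - m), swapVar m (Sum.inr (a, b)) = Sum.inl (a', b) := by
    intro a a' b h h'; simp only [swapVar, h, if_false]
    congr 1; ext <;> simp [h']
  apply Finset.sum_ninvolution ι
  · intro k
    by_cases hk : (k : ℕ) < m
    · have h1 : (ι k : ℕ) = (k : ℕ) + m := by simp [hι, hk]
      have h2 : ¬ ((ι k : ℕ) < m) := by omega
      have h3 : ((k : Fin (2 * m)) : ℕ) = (ι k : ℕ) - m := by omega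
      rw [swapL k i hk, swapR k j hk, swapR k i hk, swapL k j hk,
        swapL' (ι k) k i h2 h3, swapR' (ι k) k j h2 h3,
        swapR' (ι k) k i h2 h3, swapL' (ι k) k j h2 h3]
      ring
    · have h1 : (ι k : ℕ) = (k : ℕ) - m := by simp [hι, hk]
      have h2 : (ι k : ℕ) < m := by have := k.isLt; omega
      rw [swapL' k (ι k) i hk h1, swapR' k (ι k) j hk h1,
        swapR' k (ι k) i hk h1, swapL' k (ι k) j hk h1,
        swapL (ι k) i h2, swapR (ι k) j h2, swapR (ι k) i h2, swapL (ι k) j h2]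
      ring
  · intro k _ h
    apply absurd (congrArg Fin.val h)
    by_cases hk : (k : ℕ) < m <;> simp [hι, hk] <;> omega
  · intro k; exact Finset.mem_univ _
  · intro k
    apply Fin.ext
    by_cases hk : (k : ℕ) < m
    · have h1 : (ι k : ℕ) = (k : ℕ) + m := by simp [hι, hk]
      have h2 : ¬ ((ι k : ℕ) < m) := by omega
      have h3 : (ι (ι k) : ℕ) = (ι k : ℕ) - m := by
          simp only [hι]; rw [dif_neg (by simpa only [hι] using h2)]
      omega
    · have h1 : (ι k : ℕ) = (k : ℕ) - m := by simp [hι, hk]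
      have h2 : (ι k : ℕ) < m := by have := k.isLt; omega
      have h3 : (ι (ι k) : ℕ) = (ι k : ℕ) + m := by
          simp only [hι]; rw [dif_pos (by simpa only [hι] using h2)]
      omega

/-- Let `g = 2m` with `m ≥ 1`. A nonzero polynomial of `K[Y,Z]` involving only variables from
the top `m` rows of `Y` and of `Z` does not lie in the ideal of trivial relations `I`. -/
theorem top_rows_polynomial_not_in_trivial_relations {K : Type*} [Field K] [CharZero K]
    {m : ℕ} (hm : 1 ≤ m) (Q : MvPolynomial (MVar (2 * m)) K) (hQ : Q ≠ 0)
    (hvars : ∀ v ∈ Q.vars, (rowIdx v : ℕ) < m) :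
    Q ∉ relIdeal K (2 * m) := by
  intro hmem
  set φ : MvPolynomial (MVar (2 * m)) K →+* MvPolynomial (MVar (2 * m)) K :=
    (rename (swapVar m)).toRingHom with hφ
  have hker : relIdeal K (2 * m) ≤ RingHom.ker φ := by
    rw [relIdeal, Ideal.span_le]
    rintro p ⟨i, j, rfl⟩
    simpa [hφ, RingHom.mem_ker] using rename_swap_relMat K m i j
  have h0 : φ Q = 0 := hker hmem
  have hfix : φ Q = Q := by
    apply rename_eq_self_of_vars
    intro v hv
    have := hvars v hv
    cases v with
    | inl p => obtain ⟨i, j⟩ := p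
               have hi : (i : ℕ) < m := by simpa [rowIdx] using this
               simp [swapVar, hi]
    | inr p => obtain ⟨i, j⟩ := p
               have hi : (i : ℕ) < m := by simpa [rowIdx] using this
               simp [swapVar, hi]
  exact hQ (hfix ▸ h0)
end

section
/- Let K be a field of characteristic zero and let g = 2m with m ≥ 1. Let e ∈ K be nonzero and let A, B, C, D ∈ M_g(K) be such that the 2g×2g block matrix S = [[A,B],[C,D]] satisfies S·J·Sᵀ = e·J. Let Q ∈ K[Y,Z] be a nonzero polynomial involving only the variables Y_{ij}, Z_{ij} with 1 ≤ i ≤ m, and let P ∈ K[Y,Z] be obtained from Q by the linear substitution replacing each variable Y_{ij} by the (i,j) entry of the polynomial matrix AᵀY + CᵀZ and each variable Z_{ij} by the (i,j) entry of BᵀY + DᵀZ. Then P does not belong to the ideal I. -/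
open Matrix MvPolynomial

/-- The standard symplectic matrix `J = [[0, I], [-I, 0]]` of size `2g × 2g`. -/
def Jmat (R : Type*) [CommRing R] (g : ℕ) :
    Matrix (Fin g ⊕ Fin g) (Fin g ⊕ Fin g) R :=
  Matrix.fromBlocks 0 1 (-1) 0

/-- The assignment sending the variable `Y_{ij}` to the `(i,j)` entry of the polynomial matrix
`Aᵀ·Y + Cᵀ·Z` and the variable `Z_{ij}` to the `(i,j)` entry of `Bᵀ·Y + Dᵀ·Z`. -/
noncomputable def substAssignment {K : Type*} [CommRing K] {g : ℕ}
    (A B C D : Matrix (Fin g) (Fin g) K) (v : MVar g) : MvPolynomial (MVar g) K :=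
  Sum.elim
    (fun p => ((Aᵀ.map MvPolynomial.C) * Ymat K g + (Cᵀ.map MvPolynomial.C) * Zmat K g :
        Matrix (Fin g) (Fin g) (MvPolynomial (MVar g) K)) p.1 p.2)
    (fun p => ((Bᵀ.map MvPolynomial.C) * Ymat K g + (Dᵀ.map MvPolynomial.C) * Zmat K g :
        Matrix (Fin g) (Fin g) (MvPolynomial (MVar g) K)) p.1 p.2)
    v

lemma aux_exists_point {K : Type*} [Field K] {m : ℕ} (a : MVar (2*m) → K) :
    ∃ Y' Z' : Matrix (Fin (2*m)) (Fin (2*m)) K,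
      Y'ᵀ * Z' - Z'ᵀ * Y' = 0 ∧
      (∀ i j : Fin (2*m), (i : ℕ) < m →
        Y' i j = a (Sum.inl (i, j)) ∧ Z' i j = a (Sum.inr (i, j))) := by
  let ι : Fin m ⊕ Fin m ≃ Fin (2*m) := finSumFinEquiv.trans (finCongr (two_mul m).symm)
  let emb : Fin m → Fin (2*m) := Fin.castLE (by omega)
  refine ⟨Matrix.of fun r j => Sum.elim (fun k => a (Sum.inl (emb k, j)))
      (fun k => a (Sum.inr (emb k, j))) (ι.symm r),
    Matrix.of fun r j => Sum.elim (fun k => a (Sum.inr (emb k, j)))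
      (fun k => a (Sum.inl (emb k, j))) (ι.symm r), ?_, ?_⟩
  · ext i j
    simp only [Matrix.sub_apply, Matrix.mul_apply, Matrix.transpose_apply, Matrix.zero_apply,
      Matrix.of_apply]
    rw [← Finset.sum_sub_distrib]
    rw [← Equiv.sum_comp ι (fun r => (Sum.elim (fun k => a (Sum.inl (emb k, i)))
        (fun k => a (Sum.inr (emb k, i))) (ι.symm r)) * (Sum.elim (fun k => a (Sum.inr (emb k, j)))
        (fun k => a (Sum.inl (emb k, j))) (ι.symm r)) -
        (Sum.elim (fun k => a (Sum.inr (emb k, i))) (fun k => a (Sum.inl (emb k, i))) (ι.symm r)) *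
        (Sum.elim (fun k => a (Sum.inl (emb k, j))) (fun k => a (Sum.inr (emb k, j))) (ι.symm r)))]
    rw [Fintype.sum_sum_type, ← Finset.sum_add_distrib]
    apply Finset.sum_eq_zero
    intro k _
    simp only [Equiv.symm_apply_apply, Sum.elim_inl, Sum.elim_inr]
    ring
  · intro i j hi
    have h1 : ι.symm i = Sum.inl ⟨(i : ℕ), hi⟩ := by
      rw [Equiv.symm_apply_eq]
      apply Fin.ext
      simp [ι]
    have h2 : emb ⟨(i : ℕ), hi⟩ = i := by apply Fin.ext; simp [emb]
    constructor <;> simp [h1, h2]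

lemma aux_JJ {R : Type*} [CommRing R] (g : ℕ) :
    Jmat R g * Jmat R g = -1 := by
  simp [Jmat, Matrix.fromBlocks_multiply, ← Matrix.fromBlocks_one]
  rw [Matrix.fromBlocks_neg]
  simp

lemma aux_quad {R : Type*} [CommRing R] {g : ℕ}
    (N : Matrix (Fin g ⊕ Fin g) (Fin g) R) :
    Nᵀ * Jmat R g * N = N.toRows₁ᵀ * N.toRows₂ - N.toRows₂ᵀ * N.toRows₁ := by
  conv_lhs => rw [← Matrix.fromRows_toRows N]
  rw [Matrix.transpose_fromRows, Jmat, Matrix.fromCols_mul_fromBlocks,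
    Matrix.fromCols_mul_fromRows]
  simp only [Matrix.mul_zero, Matrix.mul_one, zero_add, add_zero,
    Matrix.mul_neg, Matrix.neg_mul, mul_zero, mul_one]
  abel

/-- Let `g = 2m` with `m ≥ 1`, `e ≠ 0`, and suppose the block matrix `S = [[A,B],[C,D]]`
satisfies `S·J·Sᵀ = e·J`. If `Q ∈ K[Y,Z]` is a nonzero polynomial involving only variables
from the top `m` rows of `Y` and of `Z`, then the polynomial `P` obtained from `Q` by
substituting `Y ↦ Aᵀ·Y + Cᵀ·Z` and `Z ↦ Bᵀ·Y + Dᵀ·Z` is not in the ideal of trivial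
relations `I`. -/
theorem substituted_polynomial_not_in_trivial_relations {K : Type*} [Field K] [CharZero K]
    {m : ℕ} (hm : 1 ≤ m) (e : K) (he : e ≠ 0)
    (A B C D : Matrix (Fin (2 * m)) (Fin (2 * m)) K)
    (hS : (Matrix.fromBlocks A B C D) * Jmat K (2 * m) * (Matrix.fromBlocks A B C D)ᵀ
        = e • Jmat K (2 * m))
    (Q : MvPolynomial (MVar (2 * m)) K) (hQ : Q ≠ 0)
    (hvars : ∀ v ∈ Q.vars, (rowIdx v : ℕ) < m) :
    MvPolynomial.aeval (substAssignment A B C D) Q ∉ relIdeal K (2 * m) := by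
  classical
  -- a point where `Q` does not vanish
  obtain ⟨a, ha⟩ : ∃ a : MVar (2*m) → K, eval a Q ≠ 0 := by
    by_contra h
    push_neg at h
    exact hQ (MvPolynomial.funext fun x => by simp [h x])
  obtain ⟨Y', Z', hYZ, htop⟩ := aux_exists_point a
  set S := Matrix.fromBlocks A B C D with hSdef
  -- a two-sided inverse of `S`
  set T : Matrix (Fin (2*m) ⊕ Fin (2*m)) (Fin (2*m) ⊕ Fin (2*m)) K :=
    Jmat K (2*m) * Sᵀ * (e⁻¹ • (-(Jmat K (2*m)))) with hTdef
  have hST : S * T = 1 := by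
    have h1 : S * T = (S * Jmat K (2*m) * Sᵀ) * (e⁻¹ • -(Jmat K (2*m))) := by
      rw [hTdef]; simp only [← Matrix.mul_assoc]
    rw [h1, hS, Matrix.smul_mul, Matrix.mul_smul, Matrix.mul_neg, aux_JJ, neg_neg, smul_smul,
      mul_inv_cancel₀ he, one_smul]
  have hTS : T * S = 1 := mul_eq_one_comm.mp hST
  set M' : Matrix (Fin (2*m) ⊕ Fin (2*m)) (Fin (2*m)) K := Matrix.fromRows Y' Z' with hM'def
  set M : Matrix (Fin (2*m) ⊕ Fin (2*m)) (Fin (2*m)) K := Tᵀ * M' with hMdef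
  have hM : Sᵀ * M = M' := by
    rw [hMdef, ← Matrix.mul_assoc, ← Matrix.transpose_mul, hTS, Matrix.transpose_one,
      Matrix.one_mul]
  -- M satisfies the relations
  have hMJM : Mᵀ * Jmat K (2*m) * M = 0 := by
    have hJ : Jmat K (2*m) = e⁻¹ • (S * Jmat K (2*m) * Sᵀ) := by
      rw [hS, smul_smul, inv_mul_cancel₀ he, one_smul]
    calc Mᵀ * Jmat K (2*m) * M = e⁻¹ • (Mᵀ * (S * Jmat K (2*m) * Sᵀ) * M) := by
          conv_lhs => rw [hJ]
          rw [Matrix.mul_smul, Matrix.smul_mul]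
      _ = e⁻¹ • ((Sᵀ * M)ᵀ * Jmat K (2*m) * (Sᵀ * M)) := by
          simp only [Matrix.transpose_mul, Matrix.transpose_transpose, Matrix.mul_assoc]
      _ = 0 := by
          rw [hM, hM'def, aux_quad, Matrix.toRows₁_fromRows, Matrix.toRows₂_fromRows, hYZ,
            smul_zero]
  have h0 : M.toRows₁ᵀ * M.toRows₂ - M.toRows₂ᵀ * M.toRows₁ = 0 := by
    rw [← aux_quad, hMJM]
  -- top-row identification
  have hAC : Aᵀ * M.toRows₁ + Cᵀ * M.toRows₂ = Y' ∧ Bᵀ * M.toRows₁ + Dᵀ * M.toRows₂ = Z' := by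
    have : Sᵀ * M = Matrix.fromRows (Aᵀ * M.toRows₁ + Cᵀ * M.toRows₂)
        (Bᵀ * M.toRows₁ + Dᵀ * M.toRows₂) := by
      conv_lhs => rw [← Matrix.fromRows_toRows M]
      rw [hSdef, Matrix.fromBlocks_transpose, Matrix.fromBlocks_mul_fromRows]
    rw [hM, hM'def] at this
    constructor
    · exact (congrArg Matrix.toRows₁ this.symm).trans (Matrix.toRows₁_fromRows _ _)
    · exact (congrArg Matrix.toRows₂ this.symm).trans (Matrix.toRows₂_fromRows _ _)
  -- the evaluation point
  set b : MVar (2*m) → K := Sum.elim (fun p => M.toRows₁ p.1 p.2) (fun p => M.toRows₂ p.1 p.2)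
    with hbdef
  -- relations vanish at b
  have hker : relIdeal K (2*m) ≤ RingHom.ker (eval b) := by
    rw [relIdeal, Ideal.span_le]
    rintro p ⟨i, j, rfl⟩
    have h0' := congrFun (congrFun h0 i) j
    simp only [Matrix.sub_apply, Matrix.mul_apply, Matrix.transpose_apply, Matrix.zero_apply,
      Matrix.toRows₁_apply, Matrix.toRows₂_apply] at h0'
    simp only [SetLike.mem_coe, RingHom.mem_ker, relMat, Matrix.sub_apply, Matrix.mul_apply,
      Matrix.transpose_apply, Ymat, Zmat, Matrix.of_apply, map_sub, map_sum, _root_.map_mul, eval_X,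
      hbdef, Sum.elim_inl, Sum.elim_inr]
    simpa using h0'
  -- evaluation of substituted variables
  have hsub : ∀ v ∈ Q.vars, eval b (substAssignment A B C D v) = a v := by
    intro v hv
    have hrow := hvars v hv
    cases v with
    | inl p =>
      have hY := congrFun (congrFun hAC.1 p.1) p.2
      simp only [Matrix.add_apply, Matrix.mul_apply] at hY
      have htp := (htop p.1 p.2 (by simpa [rowIdx] using hrow)).1
      simp only [substAssignment, Sum.elim_inl, Matrix.add_apply, Matrix.mul_apply,
        Matrix.map_apply, Ymat, Zmat, Matrix.of_apply, map_add, map_sum, _root_.map_mul, eval_C, eval_X,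
        hbdef, Sum.elim_inr]
      rw [hY, htp]
    | inr p =>
      have hY := congrFun (congrFun hAC.2 p.1) p.2
      simp only [Matrix.add_apply, Matrix.mul_apply] at hY
      have htp := (htop p.1 p.2 (by simpa [rowIdx] using hrow)).2
      simp only [substAssignment, Sum.elim_inl, Matrix.add_apply, Matrix.mul_apply,
        Matrix.map_apply, Ymat, Zmat, Matrix.of_apply, map_add, map_sum, _root_.map_mul, eval_C, eval_X,
        hbdef, Sum.elim_inr]
      rw [hY, htp]
  -- conclude
  intro hmem
  apply ha
  have h1 : eval b (aeval (substAssignment A B C D) Q) = 0 := hker hmem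
  have h2 : eval b (aeval (substAssignment A B C D) Q)
      = eval (fun v => eval b (substAssignment A B C D v)) Q := by
    rw [aeval_eq_bind₁]
    exact eval₂Hom_bind₁ _ _ _ _
  have h3 : eval (fun v => eval b (substAssignment A B C D v)) Q = eval a Q := by
    apply MvPolynomial.hom_congr_vars
    · ext x
      simp
    · intro i hi _
      simp only [eval_X]
      exact hsub i hi
    · rfl
  rw [← h3, ← h2, h1]
end

section
/- Let g = 2m with m ≥ 2 (so g is even and g > 2), let F be a subfield of ℂ, and let J_g denote the g×g block matrix [[0, I_m], [−I_m, 0]], where I_m is the m×m identity matrix. Let H ∈ M_g(ℂ), c ∈ ℂ, and M ∈ M_g(F) be such that Hᵀ·J_g·H = c·M, where M is viewed as a complex matrix via the inclusion F ⊆ ℂ. Then there exists a nonzero polynomial Q with coefficients in F in the g² variables X_{ij} (1 ≤ i,j ≤ g), homogeneous of degree 2, such that Q evaluates to 0 when each variable X_{ij} is assigned the complex value H_{ij}. -/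
open Matrix MvPolynomial

def JgMat (R : Type*) [CommRing R] (m : ℕ) :
    Matrix (Fin m ⊕ Fin m) (Fin m ⊕ Fin m) R :=
  Matrix.fromBlocks 0 1 (-1) 0

noncomputable def Pq (R : Type*) [CommRing R] (m : ℕ) [NeZero m] (a b : Fin m ⊕ Fin m) :
    MvPolynomial ((Fin m ⊕ Fin m) × (Fin m ⊕ Fin m)) R :=
  ∑ k : Fin m, (X (Sum.inl k, a) * X (Sum.inr k, b) - X (Sum.inr k, a) * X (Sum.inl k, b))

lemma Pq_eval {m : ℕ} [NeZero m] (H : Matrix (Fin m ⊕ Fin m) (Fin m ⊕ Fin m) ℂ)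
    (a b : Fin m ⊕ Fin m) :
    MvPolynomial.eval (fun p => H p.1 p.2) (Pq ℂ m a b) = (Hᵀ * JgMat ℂ m * H) a b := by
  simp [Pq, JgMat, mul_apply, Fintype.sum_sum_type, one_apply, Finset.mul_sum,
    Finset.sum_mul, mul_ite, ite_mul, Finset.sum_ite_eq', Finset.sum_sub_distrib]
  ring

lemma Pq_map {m : ℕ} [NeZero m] (F : Subfield ℂ) (a b : Fin m ⊕ Fin m) :
    MvPolynomial.map (F.subtype) (Pq F m a b) = Pq ℂ m a b := by
  set_option synthInstance.maxHeartbeats 1000000 in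
  simp only [Pq, map_sum, map_sub, _root_.map_mul, MvPolynomial.map_X]

lemma Pq_hom {m : ℕ} [NeZero m] (a b : Fin m ⊕ Fin m) :
    (Pq ℂ m a b).IsHomogeneous 2 := by
  apply IsHomogeneous.sum
  intro k _
  exact ((isHomogeneous_X _ _).mul (isHomogeneous_X _ _)).sub
    ((isHomogeneous_X _ _).mul (isHomogeneous_X _ _))

lemma XX {σ : Type*} (p q : σ) :
    (X p * X q : MvPolynomial σ ℂ) = monomial (Finsupp.single p 1 + Finsupp.single q 1) 1 := by
  rw [monomial_single_add, pow_one, ← X_pow_eq_monomial, pow_one]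

lemma Pq_coeff_self {m : ℕ} [NeZero m] {a b : Fin m ⊕ Fin m} (hab : a ≠ b) :
    MvPolynomial.coeff
      (Finsupp.single ((Sum.inl 0 : Fin m ⊕ Fin m), a) 1 +
        Finsupp.single ((Sum.inr 0 : Fin m ⊕ Fin m), b) 1) (Pq ℂ m a b) = 1 := by
  classical
  simp only [Pq, MvPolynomial.coeff_sum, coeff_sub, XX, coeff_monomial]
  rw [Finset.sum_eq_single 0]
  · rw [if_pos rfl, if_neg ?_]
    · ring
    · intro h
      have := DFunLike.congr_fun h ((Sum.inr 0 : Fin m ⊕ Fin m), a)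
      simp [Finsupp.single_apply, hab.symm] at this
  · intro k _ hk
    rw [if_neg ?_, if_neg ?_]
    · ring
    · intro h
      have := DFunLike.congr_fun h ((Sum.inr k : Fin m ⊕ Fin m), a)
      simp [Finsupp.single_apply, hab.symm] at this
    · intro h
      have := DFunLike.congr_fun h ((Sum.inl k : Fin m ⊕ Fin m), a)
      simp [Finsupp.single_apply, hk.symm] at this
  · simp

lemma Pq_coeff_other {m : ℕ} [NeZero m] {a b a' b' : Fin m ⊕ Fin m}
    (h1 : b ≠ a') (h2 : b ≠ b') :
    MvPolynomial.coeff
      (Finsupp.single ((Sum.inl 0 : Fin m ⊕ Fin m), a) 1 +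
        Finsupp.single ((Sum.inr 0 : Fin m ⊕ Fin m), b) 1) (Pq ℂ m a' b') = 0 := by
  classical
  simp only [Pq, MvPolynomial.coeff_sum, coeff_sub, XX, coeff_monomial]
  rw [Finset.sum_eq_zero]
  intro k _
  rw [if_neg ?_, if_neg ?_]
  · ring
  · intro h
    have := DFunLike.congr_fun h ((Sum.inr 0 : Fin m ⊕ Fin m), b)
    simp [Finsupp.single_apply, h1.symm, h2.symm] at this
  · intro h
    have := DFunLike.congr_fun h ((Sum.inr 0 : Fin m ⊕ Fin m), b)
    simp [Finsupp.single_apply, h1.symm, h2.symm] at this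

lemma Pq_coeff_mem {m : ℕ} [NeZero m] (F : Subfield ℂ) (a b : Fin m ⊕ Fin m)
    (d : ((Fin m ⊕ Fin m) × (Fin m ⊕ Fin m)) →₀ ℕ) :
    MvPolynomial.coeff d (Pq ℂ m a b) ∈ F := by
  rw [← Pq_map F, coeff_map]
  exact SetLike.coe_mem _

/-- Let `g = 2m` with `m ≥ 2`, let `F` be a subfield of `ℂ`, and suppose
`Hᵀ·J_g·H = c·M` for some `c ∈ ℂ` and some matrix `M` with entries in `F`. Then there is a
nonzero polynomial `Q` with coefficients in `F` in the `g²` variables `X_{ij}`, homogeneous of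
degree `2`, that vanishes at the entries of `H`. -/
theorem exists_quadratic_relation_between_periods {m : ℕ} (hm : 2 ≤ m) (F : Subfield ℂ)
    (H : Matrix (Fin m ⊕ Fin m) (Fin m ⊕ Fin m) ℂ) (c : ℂ)
    (M : Matrix (Fin m ⊕ Fin m) (Fin m ⊕ Fin m) ℂ) (hM : ∀ i j, M i j ∈ F)
    (hH : Hᵀ * JgMat ℂ m * H = c • M) :
    ∃ Q : MvPolynomial ((Fin m ⊕ Fin m) × (Fin m ⊕ Fin m)) ℂ,
      Q ≠ 0 ∧
      (∀ d, MvPolynomial.coeff d Q ∈ F) ∧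
      Q.IsHomogeneous 2 ∧
      MvPolynomial.eval (fun p => H p.1 p.2) Q = 0 := by
  haveI : NeZero m := ⟨by omega⟩
  by_cases h0 : Hᵀ * JgMat ℂ m * H = 0
  · refine ⟨Pq ℂ m (Sum.inl 0) (Sum.inr 0), ?_, fun d => Pq_coeff_mem F _ _ d, Pq_hom _ _, ?_⟩
    · intro h
      have h1 := Pq_coeff_self (m := m) (a := (Sum.inl 0 : Fin m ⊕ Fin m))
        (b := Sum.inr 0) (by simp)
      rw [h] at h1
      simp at h1
    · rw [Pq_eval, h0]
      simp
  · rw [hH] at h0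
    have hMne : M ≠ 0 := fun h => h0 (by simp [h])
    obtain ⟨i, j, hij⟩ : ∃ i j, M i j ≠ 0 := by
      by_contra h
      push_neg at h
      exact hMne (by ext i j; simpa using h i j)
    have hc : c ≠ 0 := fun h => h0 (by simp [h])
    -- antisymmetry of HᵀJH
    have hanti : (Hᵀ * JgMat ℂ m * H)ᵀ = -(Hᵀ * JgMat ℂ m * H) := by
      have hJ : (JgMat ℂ m)ᵀ = -(JgMat ℂ m) := by
        simp [JgMat, Matrix.fromBlocks_transpose, Matrix.fromBlocks_neg]
      rw [transpose_mul, transpose_mul, transpose_transpose, hJ]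
      noncomm_ring
    have hij' : i ≠ j := by
      intro h
      subst h
      have h1 : (Hᵀ * JgMat ℂ m * H) i i = -((Hᵀ * JgMat ℂ m * H) i i) := by
        conv_lhs => rw [← transpose_apply (Hᵀ * JgMat ℂ m * H) i i, hanti]
        simp
      have h2 : (Hᵀ * JgMat ℂ m * H) i i = 0 := by linear_combination h1 / 2 * 1
      rw [hH] at h2
      simp only [Matrix.smul_apply, smul_eq_mul] at h2
      exact hij ((mul_eq_zero.mp h2).resolve_left hc)
    obtain ⟨l, hli, hlj⟩ : ∃ l, l ≠ i ∧ l ≠ j := by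
      have hcard : ({i, j} : Finset (Fin m ⊕ Fin m)).card < Fintype.card (Fin m ⊕ Fin m) := by
        have h2 : ({i, j} : Finset (Fin m ⊕ Fin m)).card ≤ 2 :=
          Finset.card_insert_le _ _ |>.trans (by simp)
        have : 4 ≤ Fintype.card (Fin m ⊕ Fin m) := by
          simp [Fintype.card_sum]
          omega
        omega
      have hne : (({i, j} : Finset (Fin m ⊕ Fin m))ᶜ).Nonempty := by
        rw [← Finset.card_pos, Finset.card_compl]
        omega
      obtain ⟨l, hl⟩ := hne
      rw [Finset.mem_compl, Finset.mem_insert, Finset.mem_singleton] at hl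
      push_neg at hl
      exact ⟨l, hl.1, hl.2⟩
    refine ⟨C (M i j) * Pq ℂ m i l - C (M i l) * Pq ℂ m i j, ?_, ?_, ?_, ?_⟩
    · intro h
      have h1 : MvPolynomial.coeff
          (Finsupp.single ((Sum.inl 0 : Fin m ⊕ Fin m), i) 1 +
            Finsupp.single ((Sum.inr 0 : Fin m ⊕ Fin m), l) 1)
          (C (M i j) * Pq ℂ m i l - C (M i l) * Pq ℂ m i j) = M i j := by
        rw [coeff_sub, coeff_C_mul, coeff_C_mul, Pq_coeff_self hli.symm,
          Pq_coeff_other hli hlj]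
        ring
      rw [h] at h1
      simp at h1
      exact hij h1.symm
    · intro d
      rw [coeff_sub, coeff_C_mul, coeff_C_mul]
      exact F.sub_mem (F.mul_mem (hM i j) (Pq_coeff_mem F _ _ d))
        (F.mul_mem (hM i l) (Pq_coeff_mem F _ _ d))
    · exact ((Pq_hom i l).C_mul _).sub ((Pq_hom i j).C_mul _)
    · rw [map_sub, _root_.map_mul, _root_.map_mul, eval_C, eval_C, Pq_eval, Pq_eval, hH]
      simp only [Matrix.smul_apply, smul_eq_mul]
      ring
end

section
/- Fix an integer g ≥ 1. Every polynomial over ℂ in the 2g·g entries of a 2g×g matrix that vanishes at every N ∈ M_{2g×g}(ℂ) with Nᵀ·J·N = 0 and rank(N) = g also vanishes at every N ∈ M_{2g×g}(ℂ) with Nᵀ·J·N = 0. In other words, the set of rank-g matrices in {N ∈ M_{2g×g}(ℂ) : NᵀJN = 0} is Zariski dense in {N ∈ M_{2g×g}(ℂ) : NᵀJN = 0}. -/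
open Matrix MvPolynomial Module

section Aux

variable {g : ℕ}

/-- The symplectic bilinear form on `ℂ^{2g}`. -/
noncomputable def Bform (g : ℕ) : LinearMap.BilinForm ℂ ((Fin g ⊕ Fin g) → ℂ) :=
  Matrix.toBilin' (Jmat ℂ g)

lemma Bform_apply (x y : (Fin g ⊕ Fin g) → ℂ) :
    Bform g x y = x ⬝ᵥ (Jmat ℂ g) *ᵥ y := Matrix.toBilin'_apply' _ _ _

lemma Jmat_transpose : (Jmat ℂ g)ᵀ = -Jmat ℂ g := by
  simp [Jmat, Matrix.fromBlocks_transpose, Matrix.fromBlocks_neg]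

lemma Jmat_mul_neg_Jmat : Jmat ℂ g * (-(Jmat ℂ g)) = 1 := by
  simp [Jmat, Matrix.fromBlocks_neg, Matrix.fromBlocks_multiply,
    ← Matrix.fromBlocks_one]

lemma Bform_isAlt : (Bform g).IsAlt := by
  intro x
  have h1 : Bform g x x = x ⬝ᵥ (Jmat ℂ g) *ᵥ x := Bform_apply x x
  have h2 : x ⬝ᵥ (Jmat ℂ g) *ᵥ x = -(x ⬝ᵥ (Jmat ℂ g) *ᵥ x) := by
    conv_lhs => rw [Matrix.dotProduct_mulVec, ← Matrix.mulVec_transpose,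
      Jmat_transpose, Matrix.neg_mulVec, neg_dotProduct, dotProduct_comm]
  have := h2
  rw [eq_neg_iff_add_eq_zero] at this
  have hx : x ⬝ᵥ (Jmat ℂ g) *ᵥ x = 0 := by
    have h2' : (2 : ℂ) * (x ⬝ᵥ (Jmat ℂ g) *ᵥ x) = 0 := by ring_nf; linear_combination this
    have := mul_eq_zero.mp h2'
    simpa using this
  rw [h1, hx]

lemma Bform_isRefl : (Bform g).IsRefl := Bform_isAlt.isRefl

lemma Bform_nondegenerate : (Bform g).Nondegenerate := by
  apply Matrix.Nondegenerate.toBilin'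
  apply Matrix.nondegenerate_of_det_ne_zero
  exact (Matrix.isUnit_det_of_right_inverse (Jmat_mul_neg_Jmat (g := g))).ne_zero

lemma finrank_ambient : finrank ℂ ((Fin g ⊕ Fin g) → ℂ) = 2 * g := by
  simp [Module.finrank_pi]
  omega

/-- An isotropic subspace has dimension at most `g`. -/
lemma isotropic_finrank_le (W : Submodule ℂ ((Fin g ⊕ Fin g) → ℂ))
    (hW : ∀ x ∈ W, ∀ y ∈ W, Bform g x y = 0) : finrank ℂ W ≤ g := by
  have hle : W ≤ (Bform g).orthogonal W := by
    intro x hx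
    rw [LinearMap.BilinForm.mem_orthogonal_iff]
    intro y hy
    exact hW y hy x hx
  have h1 : finrank ℂ W ≤ finrank ℂ ((Bform g).orthogonal W) :=
    Submodule.finrank_mono hle
  have h2 : finrank ℂ ((Bform g).orthogonal W)
      = finrank ℂ ((Fin g ⊕ Fin g) → ℂ) - finrank ℂ W :=
    LinearMap.BilinForm.finrank_orthogonal Bform_nondegenerate W
  have h3 := finrank_ambient (g := g)
  have h4 : finrank ℂ W ≤ finrank ℂ ((Fin g ⊕ Fin g) → ℂ) := Submodule.finrank_le W
  omega

/-- Every isotropic subspace is contained in a Lagrangian subspace. -/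
lemma exists_lagrangian (W : Submodule ℂ ((Fin g ⊕ Fin g) → ℂ))
    (hW : ∀ x ∈ W, ∀ y ∈ W, Bform g x y = 0) :
    ∃ L : Submodule ℂ ((Fin g ⊕ Fin g) → ℂ), W ≤ L ∧ finrank ℂ L = g ∧
      ∀ x ∈ L, ∀ y ∈ L, Bform g x y = 0 := by
  suffices h : ∀ n : ℕ, ∀ W : Submodule ℂ ((Fin g ⊕ Fin g) → ℂ),
      (∀ x ∈ W, ∀ y ∈ W, Bform g x y = 0) → g - finrank ℂ W ≤ n →
      ∃ L : Submodule ℂ ((Fin g ⊕ Fin g) → ℂ), W ≤ L ∧ finrank ℂ L = g ∧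
        ∀ x ∈ L, ∀ y ∈ L, Bform g x y = 0 by
    exact h g W hW (Nat.sub_le _ _)
  intro n
  induction n with
  | zero =>
    intro W hW hn
    have h1 := isotropic_finrank_le W hW
    exact ⟨W, le_rfl, by omega, hW⟩
  | succ n ih =>
    intro W hW hn
    have h1 := isotropic_finrank_le W hW
    by_cases hfr : finrank ℂ W = g
    · exact ⟨W, le_rfl, hfr, hW⟩
    · have hlt : finrank ℂ W < g := lt_of_le_of_ne h1 hfr
      -- find v in orthogonal of W, not in W
      have horth : ¬ ((Bform g).orthogonal W ≤ W) := by
        intro hle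
        have h2 : finrank ℂ ((Bform g).orthogonal W)
            = finrank ℂ ((Fin g ⊕ Fin g) → ℂ) - finrank ℂ W :=
          LinearMap.BilinForm.finrank_orthogonal Bform_nondegenerate W
        have h3 := finrank_ambient (g := g)
        have h4 := Submodule.finrank_mono hle
        omega
      obtain ⟨v, hv1, hv2⟩ := SetLike.not_le_iff_exists.mp horth
      have hvW : ∀ w ∈ W, Bform g w v = 0 := by
        intro w hw
        exact (LinearMap.BilinForm.mem_orthogonal_iff.mp hv1) w hw
      have hWv : ∀ w ∈ W, Bform g v w = 0 := fun w hw => Bform_isRefl _ _ (hvW w hw)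
      set W' := W ⊔ (ℂ ∙ v) with hW'
      have hvne : v ≠ 0 := fun h => hv2 (h ▸ W.zero_mem)
      have hWiso' : ∀ x ∈ W', ∀ y ∈ W', Bform g x y = 0 := by
        intro x hx y hy
        obtain ⟨w, hw, p, hp, rfl⟩ := Submodule.mem_sup.mp hx
        obtain ⟨w', hw', p', hp', rfl⟩ := Submodule.mem_sup.mp hy
        obtain ⟨a, rfl⟩ := Submodule.mem_span_singleton.mp hp
        obtain ⟨b, rfl⟩ := Submodule.mem_span_singleton.mp hp'
        simp only [map_add, _root_.map_smul, LinearMap.add_apply, LinearMap.smul_apply,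
          smul_eq_mul, hW w hw w' hw', hvW w hw, hWv w' hw', Bform_isAlt v]
        ring
      have hinf : W ⊓ (ℂ ∙ v) = ⊥ := by
        rw [Submodule.eq_bot_iff]
        intro x ⟨hxW, hxv⟩
        obtain ⟨c, rfl⟩ := Submodule.mem_span_singleton.mp hxv
        by_cases hc : c = 0
        · simp [hc]
        · exact absurd (by simpa [smul_smul, inv_mul_cancel₀ hc] using W.smul_mem c⁻¹ hxW) hv2
      have hfr' : finrank ℂ W' = finrank ℂ W + 1 := by
        have h5 := Submodule.finrank_sup_add_finrank_inf_eq W (ℂ ∙ v)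
        rw [hinf] at h5
        simp only [finrank_bot, finrank_span_singleton hvne, add_zero] at h5
        rw [hW']
        omega
      obtain ⟨L, hL1, hL2, hL3⟩ := ih W' hWiso' (by omega)
      exact ⟨L, le_trans le_sup_left hL1, hL2, hL3⟩

lemma transpose_mul_mul_apply {m n : Type*} [Fintype m] [Fintype n]
    (X Y : Matrix m n ℂ) (C : Matrix m m ℂ) (j j' : n) :
    (Xᵀ * C * Y) j j' = Xᵀ j ⬝ᵥ C *ᵥ (Yᵀ j') := by
  simp only [Matrix.mul_apply, Matrix.transpose_apply, dotProduct,
    Matrix.mulVec, Finset.sum_mul, Finset.mul_sum]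
  rw [Finset.sum_comm]
  refine Finset.sum_congr rfl fun k _ => Finset.sum_congr rfl fun l _ => by ring

lemma eval_charpoly'' {n : Type*} [Fintype n] [DecidableEq n]
    (M : Matrix n n ℂ) (t : ℂ) :
    (M.charpoly).eval t = (t • (1 : Matrix n n ℂ) - M).det := by
  rw [Matrix.charpoly, ← Polynomial.coe_evalRingHom, RingHom.map_det]
  congr 1
  ext i j
  by_cases h : i = j
  · subst h
    simp [Matrix.charmatrix_apply, Matrix.one_apply, Matrix.smul_apply]
  · simp [Matrix.charmatrix_apply, Matrix.one_apply, Matrix.smul_apply, h]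

end Aux

/-- Every polynomial in the entries of a `2g × g` complex matrix vanishing at every `N` with
`Nᵀ·J·N = 0` and `rank N = g` also vanishes at every `N` with `Nᵀ·J·N = 0`; i.e., the rank-`g`
locus is Zariski dense in `{N : NᵀJN = 0}`. -/
theorem full_rank_isotropic_zariski_dense {g : ℕ} (hg : 1 ≤ g)
    (P : MvPolynomial ((Fin g ⊕ Fin g) × Fin g) ℂ)
    (hP : ∀ N : Matrix (Fin g ⊕ Fin g) (Fin g) ℂ,
      Nᵀ * Jmat ℂ g * N = 0 → N.rank = g →
      MvPolynomial.eval (fun p => N p.1 p.2) P = 0) :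
    ∀ N : Matrix (Fin g ⊕ Fin g) (Fin g) ℂ,
      Nᵀ * Jmat ℂ g * N = 0 →
      MvPolynomial.eval (fun p => N p.1 p.2) P = 0 := by
  intro N hN
  -- the column space of N is isotropic
  have hcol : ∀ j j' : Fin g, Bform g (Nᵀ j) (Nᵀ j') = 0 := by
    intro j j'
    rw [Bform_apply, ← transpose_mul_mul_apply, hN]
    rfl
  set W : Submodule ℂ ((Fin g ⊕ Fin g) → ℂ) := Submodule.span ℂ (Set.range Nᵀ) with hWdef
  have hWiso : ∀ x ∈ W, ∀ y ∈ W, Bform g x y = 0 := by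
    intro x hx y hy
    induction hx, hy using Submodule.span_induction₂ with
    | mem_mem x y hx hy =>
      obtain ⟨j, rfl⟩ := hx
      obtain ⟨j', rfl⟩ := hy
      exact hcol j j'
    | zero_left y hy => simp
    | zero_right x hx => simp
    | add_left x y z hx hy hz h1 h2 => simp [h1, h2]
    | add_right x y z hx hy hz h1 h2 => simp [h1, h2]
    | smul_left r x y hx hy h => simp [h]
    | smul_right r x y hx hy h => simp [h]
  obtain ⟨L, hWL, hLfr, hLiso⟩ := exists_lagrangian W hWiso
  -- basis of L and the matrices M, A
  let b : Basis (Fin g) ℂ L := Module.finBasisOfFinrankEq ℂ L hLfr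
  set M : Matrix (Fin g ⊕ Fin g) (Fin g) ℂ :=
    Matrix.of (fun i j => (b j : (Fin g ⊕ Fin g) → ℂ) i) with hMdef
  have hMt : ∀ j, Mᵀ j = (b j : (Fin g ⊕ Fin g) → ℂ) := fun j => rfl
  have hNL : ∀ j, Nᵀ j ∈ L := fun j => hWL (Submodule.subset_span ⟨j, rfl⟩)
  set A : Matrix (Fin g) (Fin g) ℂ :=
    Matrix.of (fun i j => b.repr ⟨Nᵀ j, hNL j⟩ i) with hAdef
  -- N = M * A
  have hNMA : N = M * A := by
    ext i j
    have h1 := b.sum_repr ⟨Nᵀ j, hNL j⟩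
    have h2 := congrFun (congrArg Subtype.val h1) i
    simp only [Submodule.coe_sum, SetLike.val_smul, Pi.smul_apply, smul_eq_mul,
      Finset.sum_apply] at h2
    rw [Matrix.mul_apply]
    have h3 : N i j = Nᵀ j i := rfl
    rw [h3, ← h2]
    exact Finset.sum_congr rfl fun k _ => by rw [hMdef, hAdef]; simp [mul_comm]
  -- M is isotropic: Mᵀ J M = 0
  have hMJM : Mᵀ * Jmat ℂ g * M = 0 := by
    ext i j
    rw [transpose_mul_mul_apply, ← Bform_apply, hMt, hMt]
    simpa using hLiso _ (b i).2 _ (b j).2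
  -- rank M = g
  have hrankM : M.rank = g := by
    rw [Matrix.rank_eq_finrank_span_cols]
    have hrange : Set.range M.col = L.subtype '' Set.range b := by
      rw [← Set.range_comp]
      rfl
    rw [hrange, ← Submodule.map_span, b.span_eq, Submodule.map_top,
      Submodule.range_subtype, hLfr]
  -- the perturbed matrices
  have hiso : ∀ t : ℂ, (M * (A + t • 1))ᵀ * Jmat ℂ g * (M * (A + t • 1)) = 0 := by
    intro t
    have : (M * (A + t • 1))ᵀ * Jmat ℂ g * (M * (A + t • 1))
        = (A + t • 1)ᵀ * (Mᵀ * Jmat ℂ g * M) * (A + t • 1) := by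
      simp only [Matrix.transpose_mul, Matrix.mul_assoc]
    rw [this, hMJM, Matrix.mul_zero, Matrix.zero_mul]
  have hrank : ∀ t : ℂ, IsUnit (A + t • 1).det → (M * (A + t • 1)).rank = g := by
    intro t ht
    rw [Matrix.rank_mul_eq_left_of_isUnit_det _ _ ht, hrankM]
  -- the entries of the perturbed matrix
  have hentry : ∀ (t : ℂ) (p : (Fin g ⊕ Fin g) × Fin g),
      (M * (A + t • (1 : Matrix (Fin g) (Fin g) ℂ))) p.1 p.2 = N p.1 p.2 + M p.1 p.2 * t := by
    intro t p
    have : M * (A + t • 1) = N + t • M := by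
      rw [Matrix.mul_add, ← hNMA, Matrix.mul_smul, Matrix.mul_one]
    rw [this]
    simp [mul_comm]
  -- the one-variable polynomial
  set q : Polynomial ℂ := MvPolynomial.aeval
    (fun p : (Fin g ⊕ Fin g) × Fin g =>
      Polynomial.C (N p.1 p.2) + Polynomial.C (M p.1 p.2) * Polynomial.X) P with hqdef
  have heval : ∀ t : ℂ, q.eval t
      = MvPolynomial.eval (fun p => N p.1 p.2 + M p.1 p.2 * t) P := by
    intro t
    have h1 : q.eval t = (Polynomial.aeval t : Polynomial ℂ →ₐ[ℂ] ℂ) q := by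
      rw [Polynomial.coe_aeval_eq_eval]
    rw [h1, hqdef, MvPolynomial.comp_aeval_apply]
    simp only [map_add, _root_.map_mul, Polynomial.aeval_C, Polynomial.aeval_X,
      Algebra.algebraMap_self, RingHom.id_apply]
    rw [MvPolynomial.aeval_def, MvPolynomial.eval, ← MvPolynomial.coe_eval₂Hom]
    simp [Algebra.algebraMap_self]
  -- finiteness of the bad set
  have hfin : {t : ℂ | (A + t • 1).det = 0}.Finite := by
    have hsub : {t : ℂ | (A + t • 1).det = 0} ⊆ {t : ℂ | ((-A).charpoly).IsRoot t} := by
      intro t ht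
      simp only [Set.mem_setOf_eq, Polynomial.IsRoot.def]
      rw [eval_charpoly'', sub_neg_eq_add, add_comm]
      exact ht
    have hfin' : {t : ℂ | ((-A).charpoly).IsRoot t}.Finite := by
      rw [← Set.not_infinite]
      intro hinf
      exact (Matrix.charpoly_monic (-A)).ne_zero
        (Polynomial.eq_zero_of_infinite_isRoot _ hinf)
    exact hfin'.subset hsub
  -- q vanishes on the (cofinite) good set
  have hroots : {t : ℂ | (A + t • 1).det = 0}ᶜ ⊆ {t : ℂ | q.IsRoot t} := by
    intro t ht
    have hu : IsUnit (A + t • 1).det := isUnit_iff_ne_zero.mpr ht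
    have h0 := hP (M * (A + t • 1)) (hiso t) (hrank t hu)
    simp only [Set.mem_setOf_eq, Polynomial.IsRoot.def]
    rw [heval t]
    have harg : (fun p : (Fin g ⊕ Fin g) × Fin g => N p.1 p.2 + M p.1 p.2 * t)
        = fun p : (Fin g ⊕ Fin g) × Fin g => (M * (A + t • (1 : Matrix (Fin g) (Fin g) ℂ))) p.1 p.2 :=
      funext fun p => (hentry t p).symm
    rw [harg]
    exact h0
  have hq0 : q = 0 :=
    Polynomial.eq_zero_of_infinite_isRoot _ ((hfin.infinite_compl).mono hroots)
  have hfinal := heval 0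
  rw [hq0] at hfinal
  simp only [Polynomial.eval_zero, mul_zero, add_zero] at hfinal
  exact hfinal.symm
end

section
/- Let f : ℂ → ℂ be complex differentiable (holomorphic) at every point of ℂ ∖ {0}, and suppose that f(x·y) = f(x) + f(y) for all nonzero x, y ∈ ℂ. Then f(z) = 0 for every z ∈ ℂ ∖ {0}. -/
/-- A function `f : ℂ → ℂ` which is holomorphic on `ℂ ∖ {0}` and satisfies
`f (x * y) = f x + f y` for all nonzero `x, y` vanishes identically on `ℂ ∖ {0}`. -/
theorem holomorphic_additive_on_units_eq_zero (f : ℂ → ℂ)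
    (hf : DifferentiableOn ℂ f {z : ℂ | z ≠ 0})
    (hmul : ∀ x y : ℂ, x ≠ 0 → y ≠ 0 → f (x * y) = f x + f y) :
    ∀ z : ℂ, z ≠ 0 → f z = 0 := by
  have hopen : IsOpen {z : ℂ | z ≠ 0} := isOpen_ne
  set g : ℂ → ℂ := fun z => f (Complex.exp z) with hg_def
  have hf1 : f 1 = 0 := by
    have h := hmul 1 1 one_ne_zero one_ne_zero
    rw [one_mul] at h
    linear_combination -h
  have hg : Differentiable ℂ g := fun z =>
    (hf.differentiableAt (hopen.mem_nhds (Complex.exp_ne_zero z))).comp z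
      (Complex.differentiable_exp z)
  have gadd : ∀ z w : ℂ, g (z + w) = g z + g w := fun z w => by
    simp only [hg_def, Complex.exp_add]
    exact hmul _ _ (Complex.exp_ne_zero z) (Complex.exp_ne_zero w)
  set a : ℂ := deriv g 0 with ha
  have hderiv : ∀ w : ℂ, HasDerivAt g a w := by
    intro w
    have h0 : HasDerivAt g a 0 := (hg 0).hasDerivAt
    have h2 : HasDerivAt (fun z : ℂ => g (z - w)) a w := by
      have h0' : HasDerivAt g a (w - w) := by rwa [sub_self]
      exact h0'.comp_sub_const w w
    have h3 : HasDerivAt (fun z : ℂ => g w + g (z - w)) a w := h2.const_add (g w)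
    convert h3 using 1
    funext z
    have := gadd w (z - w)
    rw [add_sub_cancel] at this
    exact this
  have hlin : ∀ z : ℂ, g z = a * z := by
    intro z
    have hh : Differentiable ℂ (fun z => g z - a * z) := by
      intro z
      exact ((hderiv z).sub ((hasDerivAt_id z).const_mul a)).differentiableAt
    have hd0 : ∀ z : ℂ, deriv (fun z => g z - a * z) z = 0 := by
      intro z
      have : HasDerivAt (fun z => g z - a * z) (a - a * 1) z :=
        (hderiv z).sub ((hasDerivAt_id z).const_mul a)
      simpa using this.deriv
    have := is_const_of_deriv_eq_zero hh hd0 z 0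
    have hg0 : g 0 = 0 := by simpa [hg_def, Complex.exp_zero] using hf1
    simp only [hg0, mul_zero, sub_zero] at this
    exact sub_eq_zero.mp this
  have ha0 : a = 0 := by
    have h2pi : g (2 * Real.pi * Complex.I) = 0 := by
      simp [hg_def, Complex.exp_two_pi_mul_I, hf1]
    rw [hlin] at h2pi
    have hne : (2 * Real.pi * Complex.I : ℂ) ≠ 0 := by
      simp [Real.pi_ne_zero, Complex.I_ne_zero]
    exact (mul_eq_zero.mp h2pi).resolve_right hne
  intro z hz
  have := hlin (Complex.log z)
  rw [ha0, zero_mul] at this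
  simpa [hg_def, Complex.exp_log hz] using this
end
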